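/- arXiv:2306.07470 — 2 statements merged into one kernel-verified Lean document; each statement's English description precedes it below -/
import Mathlib

section
/- (Lemma 2) The composition of polyphase anchoring with stride-s circular convolution is general shift-equivariant: fix s, H, W, C ≥ 1, a kernel h : Fin C × (ZMod (s·H) × ZMod (s·W)) → ℝ, and X : ZMod (s·H) × ZMod (s·W) → EuclideanSpace ℝ (Fin C) whose polyphase norms have a unique maximizer. Then for every (u,v) ∈ ZMod (s·H) × ZMod (s·W) there exists (a,b) ∈ ZMod H × ZMod W such that (P(shift_{(u,v)} X)) ⋆_s h = shift_{(a,b)} ((P X) ⋆_s h). -/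
open Matrix
noncomputable section
/-- Circular shift of a 2D signal `X : ZMod M × ZMod N → α` by `(u,v)`:
`(shift_{(u,v)} X)(i,j) = X (i-u, j-v)`. -/
def cshift2 {M N : ℕ} {α : Type*} (uv : ZMod M × ZMod N)
    (X : ZMod M × ZMod N → α) : ZMod M × ZMod N → α :=
  fun ij => X (ij.1 - uv.1, ij.2 - uv.2)
/-- The group homomorphism `ι_s : ZMod H → ZMod (s·H)`, `k ↦ s·k`. -/
def iotaS (s : ℕ) {H : ℕ} (k : ZMod H) : ZMod (s * H) :=
  (s : ZMod (s * H)) * ((k.val : ℕ) : ZMod (s * H))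
/-- Residue of a grid point of `ZMod (s·H) × ZMod (s·W)` modulo `s` in each coordinate. -/
def resPh (s : ℕ) {H W : ℕ} (ij : ZMod (s * H) × ZMod (s * W)) : ZMod s × ZMod s :=
  (ZMod.castHom (dvd_mul_right s H) (ZMod s) ij.1,
   ZMod.castHom (dvd_mul_right s W) (ZMod s) ij.2)

/-- Polyphase norm `N_{pq}(X) = ∑ over grid points with residue `(p,q)` of `‖X(i,j)‖²`. -/
def polyNorm (s : ℕ) {H W C : ℕ} [NeZero (s * H)] [NeZero (s * W)]
    (X : ZMod (s * H) × ZMod (s * W) → EuclideanSpace ℝ (Fin C))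
    (pq : ZMod s × ZMod s) : ℝ :=
  ∑ ij : ZMod (s * H) × ZMod (s * W), if resPh s ij = pq then ‖X ij‖ ^ 2 else 0

/-- The polyphase norms of `X` have a (unique) strict maximizer over `ZMod s × ZMod s`. -/
def HasUniqueMaxPhase (s : ℕ) {H W C : ℕ} [NeZero (s * H)] [NeZero (s * W)]
    (X : ZMod (s * H) × ZMod (s * W) → EuclideanSpace ℝ (Fin C)) : Prop :=
  ∃ pq : ZMod s × ZMod s, ∀ pq' : ZMod s × ZMod s, pq' ≠ pq →
    polyNorm s X pq' < polyNorm s X pq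

open Classical in
/-- The maximizing phase `(p̂,q̂)`, cast into the big grid via canonical representatives. -/
def anchorPhase (s : ℕ) {H W C : ℕ} [NeZero (s * H)] [NeZero (s * W)]
    (X : ZMod (s * H) × ZMod (s * W) → EuclideanSpace ℝ (Fin C)) :
    ZMod (s * H) × ZMod (s * W) :=
  if h : HasUniqueMaxPhase s X then
    (((h.choose.1.val : ℕ) : ZMod (s * H)), ((h.choose.2.val : ℕ) : ZMod (s * W)))
  else (0, 0)

/-- Polyphase anchoring operator: `P X = shift_{(-p̂',-q̂')} X`, circularly shifting `X`
so that its maximizing polyphase aligns with the anchors. -/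
def polyAnchor (s : ℕ) {H W C : ℕ} [NeZero (s * H)] [NeZero (s * W)]
    (X : ZMod (s * H) × ZMod (s * W) → EuclideanSpace ℝ (Fin C)) :
    ZMod (s * H) × ZMod (s * W) → EuclideanSpace ℝ (Fin C) :=
  cshift2 (-(anchorPhase s X).1, -(anchorPhase s X).2) X
/-- Stride-`s` circular convolution (patch embedding):
`(X ⋆_s h)(k,l) = ∑_{c} ∑_{(a,b)} h(c,a,b) · X(ι_s k + a, ι_s l + b) c`. -/
def sconv (s : ℕ) {H W C : ℕ} [NeZero (s * H)] [NeZero (s * W)]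
    (X : ZMod (s * H) × ZMod (s * W) → EuclideanSpace ℝ (Fin C))
    (h : Fin C × (ZMod (s * H) × ZMod (s * W)) → ℝ) : ZMod H × ZMod W → ℝ :=
  fun kl => ∑ c : Fin C, ∑ ab : ZMod (s * H) × ZMod (s * W),
    h (c, ab) * X (iotaS s kl.1 + ab.1, iotaS s kl.2 + ab.2) c

lemma iotaS_add (s : ℕ) {H : ℕ} [NeZero H] (k l : ZMod H) :
    iotaS s (k + l) = iotaS s k + iotaS s l := by
  unfold iotaS
  rw [← mul_add, ← Nat.cast_add]
  have h1 : k.val + l.val = (k+l).val + H * ((k.val + l.val)/H) := by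
    rw [ZMod.val_add]; exact (Nat.mod_add_div _ _).symm
  rw [h1]
  push_cast
  rw [mul_add, ← mul_assoc, mul_comm (s : ZMod (s*H)) (H : ZMod (s*H))]
  have : ((H : ZMod (s*H)) * s) = 0 := by
    rw [← Nat.cast_mul, mul_comm, ZMod.natCast_self]
  rw [this, zero_mul, add_zero]

lemma iotaS_sub (s : ℕ) {H : ℕ} [NeZero H] (k l : ZMod H) :
    iotaS s (k - l) = iotaS s k - iotaS s l := by
  have := iotaS_add s (k - l) l
  rw [sub_add_cancel] at this
  rw [this]; ring

lemma cshift2_cshift2 {M N : ℕ} {α : Type*} (u v : ZMod M × ZMod N)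
    (X : ZMod M × ZMod N → α) :
    cshift2 u (cshift2 v X) = cshift2 (u.1 + v.1, u.2 + v.2) X := by
  funext ij; simp [cshift2, sub_sub]

lemma exists_iotaS (s : ℕ) {H : ℕ} [NeZero s] [NeZero H] (x : ZMod (s*H))
    (hx : ZMod.castHom (dvd_mul_right s H) (ZMod s) x = 0) :
    ∃ a : ZMod H, iotaS s a = x := by
  haveI : NeZero (s*H) := ⟨Nat.mul_ne_zero (NeZero.ne s) (NeZero.ne H)⟩
  have h1 : ((x.val : ℕ) : ZMod s) = 0 := by
    rwa [ZMod.castHom_apply, ZMod.cast_eq_val] at hx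
  rw [ZMod.natCast_eq_zero_iff] at h1
  obtain ⟨m, hm⟩ := h1
  have hmH : m < H := by
    have := x.val_lt
    rw [hm] at this
    exact lt_of_mul_lt_mul_left this (Nat.zero_le s)
  refine ⟨(m : ZMod H), ?_⟩
  unfold iotaS
  rw [ZMod.val_natCast, Nat.mod_eq_of_lt hmH, ← Nat.cast_mul, ← hm, ZMod.natCast_val,
    ZMod.cast_id]

lemma resPh_add (s : ℕ) {H W : ℕ} (ij uv : ZMod (s * H) × ZMod (s * W)) :
    resPh s (ij.1 + uv.1, ij.2 + uv.2) = resPh s ij + resPh s uv := by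
  unfold resPh
  rw [Prod.mk_add_mk, map_add, map_add]

lemma resPh_sub (s : ℕ) {H W : ℕ} (ij uv : ZMod (s * H) × ZMod (s * W)) :
    resPh s (ij.1 - uv.1, ij.2 - uv.2) = resPh s ij - resPh s uv := by
  unfold resPh
  rw [Prod.mk_sub_mk, map_sub, map_sub]

lemma polyNorm_cshift (s : ℕ) {H W C : ℕ} [NeZero (s*H)] [NeZero (s*W)]
    (uv : ZMod (s*H) × ZMod (s*W))
    (X : ZMod (s*H) × ZMod (s*W) → EuclideanSpace ℝ (Fin C)) (pq : ZMod s × ZMod s) :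
    polyNorm s (cshift2 uv X) pq = polyNorm s X (pq - resPh s uv) := by
  unfold polyNorm
  refine Fintype.sum_equiv (Equiv.prodCongr (Equiv.subRight uv.1) (Equiv.subRight uv.2))
    _ _ (fun kl => ?_)
  simp only [Equiv.prodCongr_apply, Equiv.subRight_apply, Prod.map, cshift2]
  rw [resPh_sub]
  congr 1
  simp [sub_left_inj]

lemma uniqueMax_eq {β : Type*} (f : β → ℝ) {p q : β}
    (hp : ∀ r, r ≠ p → f r < f p) (hq : ∀ r, r ≠ q → f r < f q) : p = q := by
  by_contra hne
  exact lt_asymm (hp q (Ne.symm hne)) (hq p hne)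

lemma hasUniqueMax_shift (s : ℕ) {H W C : ℕ} [NeZero (s*H)] [NeZero (s*W)]
    (uv : ZMod (s*H) × ZMod (s*W))
    (X : ZMod (s*H) × ZMod (s*W) → EuclideanSpace ℝ (Fin C))
    (hX : HasUniqueMaxPhase s X) :
    ∀ pq', pq' ≠ hX.choose + resPh s uv →
      polyNorm s (cshift2 uv X) pq' < polyNorm s (cshift2 uv X) (hX.choose + resPh s uv) := by
  intro pq' hne
  rw [polyNorm_cshift, polyNorm_cshift, add_sub_cancel_right]
  exact hX.choose_spec _ (fun hc => hne (by rw [← hc, sub_add_cancel]))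

lemma sconv_cshift (s : ℕ) {H W C : ℕ} [NeZero s] [NeZero H] [NeZero W]
    [NeZero (s*H)] [NeZero (s*W)]
    (X : ZMod (s*H) × ZMod (s*W) → EuclideanSpace ℝ (Fin C))
    (h : Fin C × (ZMod (s*H) × ZMod (s*W)) → ℝ) (a : ZMod H) (b : ZMod W) :
    sconv s (cshift2 (iotaS s a, iotaS s b) X) h = cshift2 (a, b) (sconv s X h) := by
  funext kl
  simp only [sconv, cshift2]
  refine Finset.sum_congr rfl (fun c _ => Finset.sum_congr rfl (fun ab _ => ?_))
  have e1 : iotaS s kl.1 + ab.1 - iotaS s a = iotaS s (kl.1 - a) + ab.1 := by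
    rw [iotaS_sub]; ring
  have e2 : iotaS s kl.2 + ab.2 - iotaS s b = iotaS s (kl.2 - b) + ab.2 := by
    rw [iotaS_sub]; ring
  rw [e1, e2]

lemma anchorPhase_eq (s : ℕ) {H W C : ℕ} [NeZero (s*H)] [NeZero (s*W)]
    (X : ZMod (s*H) × ZMod (s*W) → EuclideanSpace ℝ (Fin C))
    (hX : HasUniqueMaxPhase s X) :
    anchorPhase s X =
      (((hX.choose.1.val : ℕ) : ZMod (s * H)), ((hX.choose.2.val : ℕ) : ZMod (s * W))) := by
  unfold anchorPhase
  rw [dif_pos hX]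

lemma resPh_anchor (s : ℕ) {H W C : ℕ} [NeZero s] [NeZero (s*H)] [NeZero (s*W)]
    (X : ZMod (s*H) × ZMod (s*W) → EuclideanSpace ℝ (Fin C))
    (hX : HasUniqueMaxPhase s X) :
    resPh s (anchorPhase s X) = hX.choose := by
  rw [anchorPhase_eq s X hX]
  unfold resPh
  simp only [map_natCast]
  simp only [ZMod.natCast_val, ZMod.cast_id]


/-- (Lemma 2) The composition of polyphase anchoring with stride-`s` circular convolution
is general shift-equivariant:
`(P (shift_{(u,v)} X)) ⋆_s h = shift_{(a,b)} ((P X) ⋆_s h)` for some `(a,b)`. -/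
theorem polyAnchor_sconv_general_shift_equivariant
    (s H W C : ℕ) [NeZero s] [NeZero H] [NeZero W]
    (hs : 1 ≤ s) (hH : 1 ≤ H) (hW : 1 ≤ W) (hC : 1 ≤ C)
    (h : Fin C × (ZMod (s * H) × ZMod (s * W)) → ℝ)
    (X : ZMod (s * H) × ZMod (s * W) → EuclideanSpace ℝ (Fin C))
    (hX : HasUniqueMaxPhase s X)
    (uv : ZMod (s * H) × ZMod (s * W)) :
    ∃ ab : ZMod H × ZMod W,
      sconv s (polyAnchor s (cshift2 uv X)) h = cshift2 ab (sconv s (polyAnchor s X) h) := by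
  have hXY : HasUniqueMaxPhase s (cshift2 uv X) :=
    ⟨hX.choose + resPh s uv, hasUniqueMax_shift s uv X hX⟩
  have hchoose : hXY.choose = hX.choose + resPh s uv :=
    uniqueMax_eq (polyNorm s (cshift2 uv X)) hXY.choose_spec (hasUniqueMax_shift s uv X hX)
  set aX := anchorPhase s X with haX
  set aY := anchorPhase s (cshift2 uv X) with haY
  have rA : resPh s aX = hX.choose := resPh_anchor s X hX
  have rB : resPh s aY = hX.choose + resPh s uv := by
    rw [haY, resPh_anchor s (cshift2 uv X) hXY, hchoose]
  have hres1 : ZMod.castHom (dvd_mul_right s H) (ZMod s) (uv.1 - aY.1 + aX.1) = 0 := by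
    have h1 : ZMod.castHom (dvd_mul_right s H) (ZMod s) aX.1 = hX.choose.1 :=
      congrArg Prod.fst rA
    have h2 : ZMod.castHom (dvd_mul_right s H) (ZMod s) aY.1
        = hX.choose.1 + ZMod.castHom (dvd_mul_right s H) (ZMod s) uv.1 := by
      have := congrArg Prod.fst rB
      simpa [resPh] using this
    rw [map_add, map_sub, h1, h2]
    ring
  have hres2 : ZMod.castHom (dvd_mul_right s W) (ZMod s) (uv.2 - aY.2 + aX.2) = 0 := by
    have h1 : ZMod.castHom (dvd_mul_right s W) (ZMod s) aX.2 = hX.choose.2 :=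
      congrArg Prod.snd rA
    have h2 : ZMod.castHom (dvd_mul_right s W) (ZMod s) aY.2
        = hX.choose.2 + ZMod.castHom (dvd_mul_right s W) (ZMod s) uv.2 := by
      have := congrArg Prod.snd rB
      simpa [resPh] using this
    rw [map_add, map_sub, h1, h2]
    ring
  obtain ⟨a, ha⟩ := exists_iotaS s _ hres1
  obtain ⟨b, hb⟩ := exists_iotaS s _ hres2
  refine ⟨(a, b), ?_⟩
  have hPA : polyAnchor s (cshift2 uv X)
      = cshift2 (uv.1 - aY.1 + aX.1, uv.2 - aY.2 + aX.2) (polyAnchor s X) := by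
    unfold polyAnchor
    rw [← haX, ← haY, cshift2_cshift2, cshift2_cshift2]
    have hpair : (-aY.1 + uv.1, -aY.2 + uv.2)
        = ((uv.1 - aY.1 + aX.1) + -aX.1, (uv.2 - aY.2 + aX.2) + -aX.2) := by
      rw [Prod.mk.injEq]; exact ⟨by ring, by ring⟩
    rw [hpair]
  rw [hPA, ← ha, ← hb, sconv_cshift]
end
end

section
/- (Lemma 3) The composition of polyphase anchoring with window attention is general shift-equivariant: fix s, H, W, d, d_k, d_v ≥ 1, weight matrices W_q, W_k : Matrix (Fin d) (Fin d_k) ℝ and W_v : Matrix (Fin d) (Fin d_v) ℝ, and X : ZMod (s·H) × ZMod (s·W) → EuclideanSpace ℝ (Fin d) whose polyphase norms have a unique maximizer. Then for every (u,v) ∈ ZMod (s·H) × ZMod (s·W) there exists (u',v') ∈ ZMod (s·H) × ZMod (s·W) such that A_w(P(shift_{(u,v)} X)) = shift_{(u',v')} (A_w(P X)). -/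
open Matrix
noncomputable section
/-- Two grid points lie in the same `s×s` window iff the floors of their coordinates
divided by `s` agree: `⌊i.val/s⌋ = ⌊i'.val/s⌋` and `⌊j.val/s⌋ = ⌊j'.val/s⌋`. -/
def sameWindow (s : ℕ) {H W : ℕ} (ij ij' : ZMod (s * H) × ZMod (s * W)) : Prop :=
  ij.1.val / s = ij'.1.val / s ∧ ij.2.val / s = ij'.2.val / s

instance (s : ℕ) {H W : ℕ} (ij ij' : ZMod (s * H) × ZMod (s * W)) :
    Decidable (sameWindow s ij ij') :=
  inferInstanceAs (Decidable (_ ∧ _))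

/-- Window attention with `s×s` windows: self-attention restricted to the window
containing each query token, with softmax taken over that window. -/
def windowAttn (s : ℕ) {H W d dk dv : ℕ} [NeZero (s * H)] [NeZero (s * W)]
    (Wq Wk : Matrix (Fin d) (Fin dk) ℝ) (Wv : Matrix (Fin d) (Fin dv) ℝ)
    (X : ZMod (s * H) × ZMod (s * W) → (Fin d → ℝ)) :
    ZMod (s * H) × ZMod (s * W) → (Fin dv → ℝ) :=
  fun ij => ∑ ij' : ZMod (s * H) × ZMod (s * W),
    if sameWindow s ij ij' then
      (Real.exp (Wq.transpose.mulVec (X ij) ⬝ᵥ Wk.transpose.mulVec (X ij')) /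
        ∑ ij'' : ZMod (s * H) × ZMod (s * W),
          if sameWindow s ij ij'' then
            Real.exp (Wq.transpose.mulVec (X ij) ⬝ᵥ Wk.transpose.mulVec (X ij''))
          else 0)
        • Wv.transpose.mulVec (X ij')
    else 0

/-!
Shifting `X` by `(u,v)` relabels its polyphase norms by the residue of `(u,v)` mod `s`, so
the maximising phase moves by that residue and `P (shift X)` is a shift of `P X` by a vector
whose coordinates are multiples of `s`. As `s` divides `s·H` and `s·W`, translation by such a
vector maps `s×s` windows onto windows, and window attention commutes with every permutation
of the grid that does so.
-/

namespace ZMod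

variable {s H : ℕ} [NeZero (s * H)]

theorem val_add_div_of_dvd_val {a : ZMod (s * H)} (ha : s ∣ a.val) (i : ZMod (s * H)) :
    (i + a).val / s = (i.val / s + a.val / s) % H := by
  rw [val_add, Nat.mod_mul_right_div_self, Nat.add_div_of_dvd_left ha]

theorem val_add_div_eq_iff_of_dvd_val {a : ZMod (s * H)} (ha : s ∣ a.val)
    (i i' : ZMod (s * H)) :
    (i + a).val / s = (i' + a).val / s ↔ i.val / s = i'.val / s := by
  rw [val_add_div_of_dvd_val ha, val_add_div_of_dvd_val ha]
  refine ⟨fun h => ?_, fun h => h ▸ rfl⟩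
  have h' := Nat.ModEq.add_right_cancel' (a.val / s) h
  rwa [Nat.ModEq, Nat.mod_eq_of_lt (Nat.div_lt_of_lt_mul i.val_lt),
    Nat.mod_eq_of_lt (Nat.div_lt_of_lt_mul i'.val_lt)] at h'

theorem castHom_eq_zero_iff_dvd_val (i : ZMod (s * H)) :
    castHom (dvd_mul_right s H) (ZMod s) i = 0 ↔ s ∣ i.val := by
  rw [castHom_apply, cast_eq_val, natCast_eq_zero_iff]

end ZMod

section Grid

variable {s H W : ℕ}

theorem cshift2_eq_comp_subRight {α : Type*} (uv : ZMod (s * H) × ZMod (s * W))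
    (X : ZMod (s * H) × ZMod (s * W) → α) : cshift2 uv X = X ∘ Equiv.subRight uv :=
  rfl

theorem cshift2_cshift2_s5 {α : Type*} (uv uv' : ZMod (s * H) × ZMod (s * W))
    (X : ZMod (s * H) × ZMod (s * W) → α) :
    cshift2 uv (cshift2 uv' X) = cshift2 (uv + uv') X := by
  funext ij
  simp only [cshift2, Prod.fst_add, Prod.snd_add, sub_sub]

theorem resPh_add_s5 (a b : ZMod (s * H) × ZMod (s * W)) :
    resPh s (a + b) = resPh s a + resPh s b := by
  simp only [resPh, Prod.fst_add, Prod.snd_add, map_add, Prod.mk_add_mk]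

theorem resPh_sub_s5 (a b : ZMod (s * H) × ZMod (s * W)) :
    resPh s (a - b) = resPh s a - resPh s b := by
  simp only [resPh, Prod.fst_sub, Prod.snd_sub, map_sub, Prod.mk_sub_mk]

theorem resPh_neg (a : ZMod (s * H) × ZMod (s * W)) : resPh s (-a) = -resPh s a := by
  simp only [resPh, Prod.fst_neg, Prod.snd_neg, map_neg, Prod.neg_mk]

variable [NeZero (s * H)] [NeZero (s * W)]

theorem resPh_eq_zero_iff (w : ZMod (s * H) × ZMod (s * W)) :
    resPh s w = 0 ↔ s ∣ w.1.val ∧ s ∣ w.2.val := by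
  rw [resPh, Prod.mk_eq_zero, ZMod.castHom_eq_zero_iff_dvd_val, ZMod.castHom_eq_zero_iff_dvd_val]

theorem sameWindow_add_add_iff {w : ZMod (s * H) × ZMod (s * W)} (hw : resPh s w = 0)
    (p q : ZMod (s * H) × ZMod (s * W)) :
    sameWindow s (p + w) (q + w) ↔ sameWindow s p q := by
  obtain ⟨h₁, h₂⟩ := (resPh_eq_zero_iff w).1 hw
  exact and_congr (ZMod.val_add_div_eq_iff_of_dvd_val h₁ p.1 q.1)
    (ZMod.val_add_div_eq_iff_of_dvd_val h₂ p.2 q.2)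

theorem windowAttn_comp_perm {d dk dv : ℕ} (Wq Wk : Matrix (Fin d) (Fin dk) ℝ)
    (Wv : Matrix (Fin d) (Fin dv) ℝ) (σ : Equiv.Perm (ZMod (s * H) × ZMod (s * W)))
    (hσ : ∀ p q, sameWindow s (σ p) (σ q) ↔ sameWindow s p q)
    (Y : ZMod (s * H) × ZMod (s * W) → (Fin d → ℝ)) :
    windowAttn s Wq Wk Wv (Y ∘ σ) = windowAttn s Wq Wk Wv Y ∘ σ := by
  funext ij
  simp only [windowAttn, Function.comp_apply]
  have reindex : ∀ {M : Type} [AddCommMonoid M] (F : ZMod (s * H) × ZMod (s * W) → M),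
      ∑ x, (if sameWindow s (σ ij) x then F x else 0) =
        ∑ x, if sameWindow s ij x then F (σ x) else 0 := fun F => by
    rw [← Equiv.sum_comp σ]
    simp only [hσ]
  simp only [reindex]

theorem windowAttn_cshift2 {d dk dv : ℕ} (Wq Wk : Matrix (Fin d) (Fin dk) ℝ)
    (Wv : Matrix (Fin d) (Fin dv) ℝ) {w : ZMod (s * H) × ZMod (s * W)} (hw : resPh s w = 0)
    (Y : ZMod (s * H) × ZMod (s * W) → (Fin d → ℝ)) :
    windowAttn s Wq Wk Wv (cshift2 w Y) = cshift2 w (windowAttn s Wq Wk Wv Y) := by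
  have hneg : resPh s (-w) = 0 := by rw [resPh_neg, hw, neg_zero]
  refine windowAttn_comp_perm Wq Wk Wv (Equiv.subRight w) (fun p q => ?_) Y
  simpa only [Equiv.subRight_apply, sub_eq_add_neg] using sameWindow_add_add_iff hneg p q

end Grid

section Polyphase

variable {s H W C : ℕ} [NeZero (s * H)] [NeZero (s * W)]

theorem polyNorm_cshift2 (X : ZMod (s * H) × ZMod (s * W) → EuclideanSpace ℝ (Fin C))
    (uv : ZMod (s * H) × ZMod (s * W)) (pq : ZMod s × ZMod s) :
    polyNorm s (cshift2 uv X) pq = polyNorm s X (pq - resPh s uv) := by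
  rw [polyNorm, ← Equiv.sum_comp (Equiv.addRight uv)]
  simp only [polyNorm, cshift2_eq_comp_subRight, Function.comp_apply, Equiv.coe_addRight,
    Equiv.subRight_apply, add_sub_cancel_right, resPh_add_s5, eq_sub_iff_add_eq]

theorem resPh_anchorPhase [NeZero s]
    {X : ZMod (s * H) × ZMod (s * W) → EuclideanSpace ℝ (Fin C)}
    {m : ZMod s × ZMod s} (hm : ∀ pq ≠ m, polyNorm s X pq < polyNorm s X m) :
    resPh s (anchorPhase s X) = m := by
  have hX : HasUniqueMaxPhase s X := ⟨m, hm⟩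
  have hchoose : hX.choose = m := by
    by_contra hne
    exact lt_asymm (hm _ hne) (hX.choose_spec m (Ne.symm hne))
  rw [anchorPhase, dif_pos hX, hchoose, resPh, map_natCast, map_natCast, ZMod.natCast_zmod_val,
    ZMod.natCast_zmod_val]

theorem resPh_anchorPhase_cshift2 [NeZero s]
    {X : ZMod (s * H) × ZMod (s * W) → EuclideanSpace ℝ (Fin C)} (hX : HasUniqueMaxPhase s X)
    (uv : ZMod (s * H) × ZMod (s * W)) :
    resPh s (anchorPhase s (cshift2 uv X)) = resPh s (anchorPhase s X) + resPh s uv := by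
  obtain ⟨m, hm⟩ := hX
  have hm' : ∀ pq ≠ m + resPh s uv,
      polyNorm s (cshift2 uv X) pq < polyNorm s (cshift2 uv X) (m + resPh s uv) := by
    intro pq hne
    rw [polyNorm_cshift2, polyNorm_cshift2, add_sub_cancel_right]
    exact hm _ fun h => hne (sub_eq_iff_eq_add.1 h)
  rw [resPh_anchorPhase hm', resPh_anchorPhase hm]

theorem polyAnchor_cshift2 (X : ZMod (s * H) × ZMod (s * W) → EuclideanSpace ℝ (Fin C))
    (uv : ZMod (s * H) × ZMod (s * W)) :
    polyAnchor s (cshift2 uv X) =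
      cshift2 (uv - anchorPhase s (cshift2 uv X) + anchorPhase s X) (polyAnchor s X) := by
  change cshift2 (-_) _ = cshift2 _ (cshift2 (-_) _)
  rw [cshift2_cshift2_s5, cshift2_cshift2_s5]
  congr 1
  abel

end Polyphase

theorem polyAnchor_windowAttn_general_shift_equivariant_general
    (s H W d dk dv : ℕ) [NeZero s] [NeZero H] [NeZero W]
    (Wq Wk : Matrix (Fin d) (Fin dk) ℝ) (Wv : Matrix (Fin d) (Fin dv) ℝ)
    (X : ZMod (s * H) × ZMod (s * W) → EuclideanSpace ℝ (Fin d))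
    (hX : HasUniqueMaxPhase s X)
    (uv : ZMod (s * H) × ZMod (s * W)) :
    ∃ u'v' : ZMod (s * H) × ZMod (s * W),
      windowAttn s Wq Wk Wv (fun ij => WithLp.ofLp (polyAnchor s (cshift2 uv X) ij)) =
        cshift2 u'v' (windowAttn s Wq Wk Wv (fun ij => WithLp.ofLp (polyAnchor s X ij))) := by
  set w := uv - anchorPhase s (cshift2 uv X) + anchorPhase s X
  have hw : resPh s w = 0 := by
    rw [resPh_add_s5, resPh_sub_s5, resPh_anchorPhase_cshift2 hX]
    abel
  refine ⟨w, ?_⟩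
  rw [polyAnchor_cshift2]
  exact windowAttn_cshift2 Wq Wk Wv hw fun ij => WithLp.ofLp (polyAnchor s X ij)

/-- (Lemma 3) The composition of polyphase anchoring with window attention is general
shift-equivariant: `A_w (P (shift_{(u,v)} X)) = shift_{(u',v')} (A_w (P X))` for some
shift `(u',v')`, where the window size equals the polyphase stride `s`. -/
theorem polyAnchor_windowAttn_general_shift_equivariant
    (s H W d dk dv : ℕ) [NeZero s] [NeZero H] [NeZero W]
    (hs : 1 ≤ s) (hH : 1 ≤ H) (hW : 1 ≤ W) (hd : 1 ≤ d) (hdk : 1 ≤ dk) (hdv : 1 ≤ dv)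
    (Wq Wk : Matrix (Fin d) (Fin dk) ℝ) (Wv : Matrix (Fin d) (Fin dv) ℝ)
    (X : ZMod (s * H) × ZMod (s * W) → EuclideanSpace ℝ (Fin d))
    (hX : HasUniqueMaxPhase s X)
    (uv : ZMod (s * H) × ZMod (s * W)) :
    ∃ u'v' : ZMod (s * H) × ZMod (s * W),
      windowAttn s Wq Wk Wv (fun ij => WithLp.ofLp (polyAnchor s (cshift2 uv X) ij)) =
        cshift2 u'v' (windowAttn s Wq Wk Wv (fun ij => WithLp.ofLp (polyAnchor s X ij))) :=
  polyAnchor_windowAttn_general_shift_equivariant_general s H W d dk dv Wq Wk Wv X hX uv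
end
end
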